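/- arXiv:1201.1342 — 4 statements merged into one kernel-verified Lean document; each statement's English description precedes it below -/
import Mathlib

section
/- The center of the Schrödinger–Virasoro Lie algebra 𝔰𝔳 is exactly the two-dimensional subspace ℂM₀ ⊕ ℂc spanned by M₀ and c. -/
/-- Index type for the distinguished basis of the Schrödinger–Virasoro algebra.
`Y n` stands for the basis element `Y_{n+1/2}`. -/
inductive SVIndex : Type
  | L : ℤ → SVIndex
  | M : ℤ → SVIndex
  | Y : ℤ → SVIndex
  | c : SVIndex

/-- A realization of the Schrödinger–Virasoro Lie algebra: a complex Lie algebra `sv`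
with distinguished elements `L n`, `M n`, `Y n` (representing `Y_{n+1/2}`) and `c`
which form a basis and satisfy the defining bracket relations. -/
structure SVAlgebra (sv : Type*) [LieRing sv] [LieAlgebra ℂ sv] where
  L : ℤ → sv
  M : ℤ → sv
  Y : ℤ → sv
  c : sv
  indep : LinearIndependent ℂ (fun i : SVIndex =>
    match i with
    | .L n => L n
    | .M n => M n
    | .Y n => Y n
    | .c => c)
  span_top : Submodule.span ℂ (Set.range (fun i : SVIndex =>
    match i with
    | .L n => L n
    | .M n => M n
    | .Y n => Y n
    | .c => c)) = ⊤
  bracket_LL : ∀ m n : ℤ, ⁅L m, L n⁆ =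
    ((n : ℂ) - (m : ℂ)) • L (m + n)
      + (if m + n = 0 then ((m : ℂ) ^ 3 - (m : ℂ)) / 12 else 0) • c
  bracket_LM : ∀ m n : ℤ, ⁅L m, M n⁆ = (n : ℂ) • M (m + n)
  bracket_LY : ∀ m n : ℤ, ⁅L m, Y n⁆ = ((n : ℂ) + (1 - (m : ℂ)) / 2) • Y (m + n)
  bracket_YY : ∀ m n : ℤ, ⁅Y m, Y n⁆ = ((n : ℂ) - (m : ℂ)) • M (m + n + 1)
  bracket_MM : ∀ m n : ℤ, ⁅M m, M n⁆ = 0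
  bracket_MY : ∀ m n : ℤ, ⁅M m, Y n⁆ = 0
  bracket_c : ∀ x : sv, ⁅x, c⁆ = 0

variable {sv : Type*} [LieRing sv] [LieAlgebra ℂ sv]

/-!
`ad L₀` is diagonal in the standard basis, with eigenvalue the index `n`, `n + 1/2`, `0` on
`L n`, `M n`, `Y n`, `c`. A central element is killed by `ad L₀`, so it lies in the span of
the zero-eigenvectors `L 0`, `M 0`, `c`; bracketing with `L 1` then kills its `L 0`-component,
since `⁅L 1, L 0⁆ = -L 1` while `M 0` and `c` are central.
-/

namespace Module.Basis

variable {ι R M : Type*} [CommSemiring R] [AddCommMonoid M] [Module R M]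

theorem repr_apply_of_apply_eq_smul (b : Basis ι R M) {f : M →ₗ[R] M} {g : ι → R}
    (hf : ∀ i, f (b i) = g i • b i) (x : M) (i : ι) :
    b.repr (f x) i = g i * b.repr x i := by
  have h : (Finsupp.lapply i ∘ₗ (b.repr : M →ₗ[R] ι →₀ R)) ∘ₗ f =
      g i • (Finsupp.lapply i ∘ₗ (b.repr : M →ₗ[R] ι →₀ R)) := by
    refine b.ext fun j => ?_
    rcases eq_or_ne j i with rfl | hji
    · simp [hf]
    · simp [hf, hji]
  simpa using LinearMap.congr_fun h x

theorem mem_span_image_of_apply_eq_smul_of_map_eq_zero [NoZeroDivisors R] (b : Basis ι R M)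
    {f : M →ₗ[R] M} {g : ι → R} (hf : ∀ i, f (b i) = g i • b i) {x : M} (hx : f x = 0) :
    x ∈ Submodule.span R (b '' {i | g i = 0}) := by
  rw [b.mem_span_image]
  intro i hi
  have := b.repr_apply_of_apply_eq_smul hf x i
  rw [hx, map_zero, Finsupp.zero_apply, eq_comm, mul_eq_zero] at this
  exact this.resolve_right (Finsupp.mem_support_iff.mp hi)

end Module.Basis

theorem LieAlgebra.mem_center_of_forall_basis_lie {ι R L : Type*} [CommRing R] [LieRing L]
    [LieAlgebra R L] (b : Module.Basis ι R L) {x : L} (h : ∀ i, ⁅b i, x⁆ = 0) :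
    x ∈ LieAlgebra.center R L := by
  rw [LieModule.mem_maxTrivSubmodule]
  intro y
  induction b.mem_span y using Submodule.span_induction with
  | mem _ hy => obtain ⟨i, rfl⟩ := hy; exact h i
  | zero => exact zero_lie x
  | add _ _ _ _ hy hz => rw [add_lie, hy, hz, add_zero]
  | smul a _ _ hy => rw [smul_lie, hy, smul_zero]

noncomputable def SVIndex.degree : SVIndex → ℂ
  | .L n => n
  | .M n => n
  | .Y n => n + 1 / 2
  | .c => 0

theorem SVIndex.degree_eq_zero_iff (i : SVIndex) :
    i.degree = 0 ↔ i = .L 0 ∨ i = .M 0 ∨ i = .c := by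
  cases i with
  | L n | M n => simp [SVIndex.degree]
  | Y n =>
    simp only [SVIndex.degree, reduceCtorEq, or_self, iff_false]
    intro h
    have h2 : ((2 * n + 1 : ℤ) : ℂ) = 0 := by push_cast; linear_combination 2 * h
    have : 2 * n + 1 = 0 := by exact_mod_cast h2
    omega
  | c => simp [SVIndex.degree]

namespace SVAlgebra

variable (A : SVAlgebra sv)

noncomputable def basis : Module.Basis SVIndex ℂ sv :=
  .mk A.indep A.span_top.ge

@[simp] theorem basis_L (n : ℤ) : A.basis (.L n) = A.L n := Module.Basis.mk_apply _ _ _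
@[simp] theorem basis_M (n : ℤ) : A.basis (.M n) = A.M n := Module.Basis.mk_apply _ _ _
@[simp] theorem basis_Y (n : ℤ) : A.basis (.Y n) = A.Y n := Module.Basis.mk_apply _ _ _
@[simp] theorem basis_c : A.basis .c = A.c := Module.Basis.mk_apply _ _ _

theorem c_mem_center : A.c ∈ LieAlgebra.center ℂ sv :=
  (LieModule.mem_maxTrivSubmodule ℂ sv sv _).mpr A.bracket_c

theorem M_zero_mem_center : A.M 0 ∈ LieAlgebra.center ℂ sv := by
  refine LieAlgebra.mem_center_of_forall_basis_lie A.basis fun i => ?_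
  cases i with
  | L n => simp [A.bracket_LM]
  | M n => rw [basis_M, ← lie_skew, A.bracket_MM, neg_zero]
  | Y n => rw [basis_Y, ← lie_skew, A.bracket_MY, neg_zero]
  | c => rw [basis_c, ← lie_skew, A.bracket_c, neg_zero]

theorem span_M_zero_c_le_center :
    Submodule.span ℂ {A.M 0, A.c} ≤ (LieAlgebra.center ℂ sv : Submodule ℂ sv) := by
  rw [Submodule.span_le, Set.insert_subset_iff, Set.singleton_subset_iff]
  exact ⟨A.M_zero_mem_center, A.c_mem_center⟩

theorem lie_L_zero_basis (i : SVIndex) : ⁅A.L 0, A.basis i⁆ = i.degree • A.basis i := by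
  cases i <;> simp [SVIndex.degree, A.bracket_LL, A.bracket_LM, A.bracket_LY, A.bracket_c]

theorem mem_span_L_zero_M_zero_c_of_lie_L_zero_eq_zero {x : sv} (hx : ⁅A.L 0, x⁆ = 0) :
    x ∈ Submodule.span ℂ {A.L 0, A.M 0, A.c} := by
  have hker : {i : SVIndex | i.degree = 0} = {.L 0, .M 0, .c} := by
    ext i; exact i.degree_eq_zero_iff
  have := A.basis.mem_span_image_of_apply_eq_smul_of_map_eq_zero
    (f := LieAlgebra.ad ℂ sv (A.L 0)) A.lie_L_zero_basis hx
  simpa [hker, Set.image_insert_eq] using this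

end SVAlgebra

/-- The center of the Schrödinger–Virasoro Lie algebra is exactly `ℂ·M₀ ⊕ ℂ·c`. -/
theorem sv_center_eq_span (A : SVAlgebra sv) :
    (LieAlgebra.center ℂ sv : Submodule ℂ sv) =
      Submodule.span ℂ ({A.M 0, A.c} : Set sv) := by
  refine le_antisymm (fun z hz => ?_) A.span_M_zero_c_le_center
  have hz : ∀ x, ⁅x, z⁆ = 0 := (LieModule.mem_maxTrivSubmodule ℂ sv sv z).mp hz
  obtain ⟨a, w, hw, rfl⟩ :=
    Submodule.mem_span_insert.mp (A.mem_span_L_zero_M_zero_c_of_lie_L_zero_eq_zero (hz _))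
  have hw_central : ⁅A.L 1, w⁆ = 0 :=
    (LieModule.mem_maxTrivSubmodule ℂ sv sv w).mp (A.span_M_zero_c_le_center hw) _
  have ha : a • A.L 1 = 0 := by
    have := hz (A.L 1)
    rw [lie_add, hw_central, lie_smul, A.bracket_LL] at this
    simpa using this
  have hL₁ : A.L 1 ≠ 0 := by simpa using A.basis.ne_zero (.L 1)
  rw [smul_eq_zero, or_iff_left hL₁] at ha
  simpa [ha] using hw
end

section
/- The subspace M ⊕ Y ⊕ ℂc of 𝔰𝔳, where M = span_ℂ{M_n : n ∈ ℤ} and Y = span_ℂ{Y_{n+1/2} : n ∈ ℤ}, is an ideal of 𝔰𝔳, and it is the unique maximal proper ideal of 𝔰𝔳: every proper ideal of 𝔰𝔳 is contained in M ⊕ Y ⊕ ℂc. -/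
variable {sv : Type*} [LieRing sv] [LieAlgebra ℂ sv]

/-!
`ad L₀` is diagonal on the basis, with eigenvalue `n` on `L_n, M_n`, `n + 1/2` on `Y_{n+1/2}` and
`0` on `c`, so an ideal contains the `ad L₀`-homogeneous components of each of its elements. An
ideal not inside `M ⊕ Y ⊕ ℂc` therefore contains some `a L_n + w` with `a ≠ 0` and
`w ∈ M ⊕ Y ⊕ ℂc`. Bracketing it with `M_k`, then `Y_k`, then `L_k` for `k > |n|` isolates a single
`M_j`, `Y_j` and `L_j` in the ideal; the action of the `L`'s moves each of them to all indices,
and `⁅L_2, L_{-2}⁆` then yields `c`, so the ideal is everything.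
-/

theorem Submodule.mem_of_sum_mem_of_eigen {K V ι : Type*} [Field K] [AddCommGroup V]
    [Module K V] {f : Module.End K V} {p : Submodule K V} (hp : ∀ x ∈ p, f x ∈ p)
    {s : Finset ι} {μ : ι → K} (hμ : Set.InjOn μ s) {v : ι → V}
    (hv : ∀ i ∈ s, f (v i) = μ i • v i) (hs : ∑ i ∈ s, v i ∈ p) {i : ι} (hi : i ∈ s) :
    v i ∈ p := by
  classical
  induction s using Finset.induction_on generalizing v i with
  | empty => simp at hi
  | insert a t ha ih =>
    rw [Finset.sum_insert ha] at hs
    -- `f - μ a` kills `v a` and rescales every other `v j` by the nonzero `μ j - μ a`.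
    have hrest : ∀ j ∈ t, v j ∈ p := by
      intro j hj
      have hμj : μ j - μ a ≠ 0 := sub_ne_zero.mpr fun h =>
        ha (hμ (Finset.mem_insert_of_mem hj) (Finset.mem_insert_self a t) h ▸ hj)
      have hshift : f (v a + ∑ i ∈ t, v i) - μ a • (v a + ∑ i ∈ t, v i) =
          ∑ i ∈ t, (μ i - μ a) • v i := by
        simp only [map_add, map_sum, hv a (Finset.mem_insert_self a t), smul_add,
          Finset.smul_sum, sub_smul, Finset.sum_sub_distrib]
        rw [Finset.sum_congr rfl fun i hi => hv i (Finset.mem_insert_of_mem hi)]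
        abel
      have hmem := ih (hμ.mono (Finset.subset_insert a t)) (v := fun i => (μ i - μ a) • v i)
        (fun i hi => by rw [map_smul, hv i (Finset.mem_insert_of_mem hi), smul_comm])
        (hshift ▸ p.sub_mem (hp _ hs) (p.smul_mem _ hs)) hj
      exact (p.smul_mem_iff hμj).mp hmem
    rcases Finset.mem_insert.mp hi with rfl | hi
    · simpa using p.sub_mem hs (p.sum_mem hrest)
    · exact hrest i hi

theorem Submodule.sum_filter_mem_of_eigen {K V ι : Type*} [Field K] [AddCommGroup V]
    [Module K V] [DecidableEq K] {f : Module.End K V} {p : Submodule K V}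
    (hp : ∀ x ∈ p, f x ∈ p) {s : Finset ι} {μ : ι → K} {v : ι → V}
    (hv : ∀ i ∈ s, f (v i) = μ i • v i) (hs : ∑ i ∈ s, v i ∈ p) (c : K) :
    ∑ i ∈ s with μ i = c, v i ∈ p := by
  by_cases hc : c ∈ s.image μ
  · refine mem_of_sum_mem_of_eigen hp (μ := id) (v := fun d => ∑ i ∈ s with μ i = d, v i)
      (Set.injOn_id _) (fun d _ => ?_) ?_ hc
    · rw [map_sum, Finset.smul_sum]
      refine Finset.sum_congr rfl fun i hi => ?_
      rw [Finset.mem_filter] at hi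
      rw [hv i hi.1, hi.2, id]
    · rwa [Finset.sum_fiberwise_of_maps_to fun i hi => Finset.mem_image_of_mem μ hi]
  · rw [Finset.filter_eq_empty_iff.mpr fun i hi (h : μ i = c) =>
      hc (h ▸ Finset.mem_image_of_mem μ hi),
      Finset.sum_empty]
    exact p.zero_mem

theorem LieSubmodule.mem_of_smul_mem {K L M : Type*} [Field K] [LieRing L] [AddCommGroup M]
    [Module K M] [LieRingModule L M] (N : LieSubmodule K L M) {a : K} (ha : a ≠ 0) {x : M}
    (h : a • x ∈ N) : x ∈ N :=
  ((N : Submodule K M).smul_mem_iff ha).mp h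

section LieSpan

variable {R L : Type*} [CommRing R] [LieRing L] [LieAlgebra R L]

theorem lie_mem_of_mem_span_left {G : Set L} {P : Submodule R L} {w : L}
    (hw : w ∈ Submodule.span R G) (y : L) (h : ∀ g ∈ G, ⁅g, y⁆ ∈ P) : ⁅w, y⁆ ∈ P := by
  induction hw using Submodule.span_induction with
  | mem g hg => exact h g hg
  | zero => simp
  | add a b _ _ ha hb => rw [add_lie]; exact P.add_mem ha hb
  | smul r a _ ha => rw [smul_lie]; exact P.smul_mem r ha

theorem lie_mem_span_of_span_eq_top {B G : Set L} (hB : Submodule.span R B = ⊤)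
    (h : ∀ b ∈ B, ∀ g ∈ G, ⁅b, g⁆ ∈ Submodule.span R G) (x : L) {y : L}
    (hy : y ∈ Submodule.span R G) : ⁅x, y⁆ ∈ Submodule.span R G := by
  refine lie_mem_of_mem_span_left (hB ▸ Submodule.mem_top) y fun b hb => ?_
  rw [← lie_skew]
  refine neg_mem (lie_mem_of_mem_span_left hy b fun g hg => ?_)
  rw [← lie_skew]
  exact neg_mem (h b hb g hg)

end LieSpan

noncomputable def SVIndex.weight : SVIndex → ℂ
  | .L n => n
  | .M n => n
  | .Y n => n + 1 / 2
  | .c => 0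

namespace SVAlgebra

variable (A : SVAlgebra sv)

theorem c_lie (x : sv) : ⁅A.c, x⁆ = 0 := by rw [← lie_skew, A.bracket_c, neg_zero]

theorem Y_lie_M (m n : ℤ) : ⁅A.Y m, A.M n⁆ = 0 := by rw [← lie_skew, A.bracket_MY, neg_zero]

theorem L_zero_lie_basis (i : SVIndex) : ⁅A.L 0, A.basis i⁆ = i.weight • A.basis i := by
  cases i <;> simp [SVIndex.weight, A.bracket_c, A.bracket_LL, A.bracket_LM, A.bracket_LY]

theorem lie_mem_span_M_Y_c (x : sv) {y : sv}
    (hy : y ∈ Submodule.span ℂ (Set.range A.M ∪ Set.range A.Y ∪ {A.c})) :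
    ⁅x, y⁆ ∈ Submodule.span ℂ (Set.range A.M ∪ Set.range A.Y ∪ {A.c}) := by
  refine lie_mem_span_of_span_eq_top (B := Set.range A.basis) A.basis.span_eq ?_ x hy
  rintro _ ⟨i, rfl⟩ _ ((⟨n, rfl⟩ | ⟨n, rfl⟩) | rfl) <;> cases i <;>
    simp only [basis_L, basis_M, basis_Y, basis_c, A.bracket_LM, A.bracket_MM, A.Y_lie_M,
      A.c_lie, A.bracket_LY, A.bracket_MY, A.bracket_YY, A.bracket_c] <;>
    first
    | exact Submodule.zero_mem _
    | exact Submodule.smul_mem _ _ (Submodule.subset_span (by simp))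

def maxIdeal : LieIdeal ℂ sv where
  toSubmodule := Submodule.span ℂ (Set.range A.M ∪ Set.range A.Y ∪ {A.c})
  lie_mem := A.lie_mem_span_M_Y_c _

theorem basis_mem_maxIdeal {i : SVIndex} (hi : ∀ n, i ≠ .L n) : A.basis i ∈ A.maxIdeal := by
  refine Submodule.subset_span ?_
  cases i <;> simp_all

variable {A} {J : LieIdeal ℂ sv}

theorem M_mem_of_M_mem {j : ℤ} (hj : j ≠ 0) (h : A.M j ∈ J) (n : ℤ) : A.M n ∈ J := by
  have hbr := lie_mem_right ℂ sv J (A.L (n - j)) _ h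
  rw [A.bracket_LM, sub_add_cancel] at hbr
  exact J.mem_of_smul_mem (Int.cast_ne_zero.mpr hj) hbr

theorem Y_mem_of_Y_mem {j : ℤ} (h : A.Y j ∈ J) (n : ℤ) : A.Y n ∈ J := by
  -- `⁅L (n - i), Y i⁆` is a multiple of `Y n`, nonzero unless `n = 3i + 1`.
  have step (i : ℤ) (hi : A.Y i ∈ J) (n : ℤ) (hn : n ≠ 3 * i + 1) : A.Y n ∈ J := by
    have hbr := lie_mem_right ℂ sv J (A.L (n - i)) _ hi
    rw [A.bracket_LY, sub_add_cancel, Int.cast_sub] at hbr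
    refine J.mem_of_smul_mem (fun h0 => hn ?_) hbr
    exact_mod_cast (by linear_combination -2 * h0 : (n : ℂ) = 3 * i + 1)
  by_cases hn : n = 3 * j + 1
  · exact step (j + 2) (step j h (j + 2) (by omega)) n (by omega)
  · exact step j h n hn

theorem L_mem_of_L_mem {j : ℤ} (h : A.L j ∈ J) (n : ℤ) : A.L n ∈ J := by
  -- `⁅L (n - i), L i⁆` is a multiple of `L n` when `n ≠ 0`, nonzero unless `n = 2i`.
  have step (i : ℤ) (hi : A.L i ∈ J) (n : ℤ) (hn0 : n ≠ 0) (hn : n ≠ 2 * i) : A.L n ∈ J := by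
    have hbr := lie_mem_right ℂ sv J (A.L (n - i)) _ hi
    rw [A.bracket_LL, sub_add_cancel, if_neg hn0, zero_smul, add_zero, Int.cast_sub] at hbr
    refine J.mem_of_smul_mem (fun h0 => hn ?_) hbr
    exact_mod_cast (by linear_combination -h0 : (n : ℂ) = 2 * i)
  have hne (n : ℤ) (hn0 : n ≠ 0) : A.L n ∈ J := by
    by_cases hn : n = 2 * j
    · exact step (3 * j) (step j h (3 * j) (by omega) (by omega)) n hn0 (by omega)
    · exact step j h n hn0 hn
  have hL0 : A.L 0 = (-2⁻¹ : ℂ) • ⁅A.L 1, A.L (-1)⁆ := by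
    rw [A.bracket_LL]
    norm_num
    module
  rcases eq_or_ne n 0 with rfl | hn0
  · rw [hL0]
    exact J.smul_mem _ (lie_mem_right ℂ sv J _ _ (hne (-1) (by omega)))
  · exact hne n hn0

theorem c_mem_of_forall_L_mem (h : ∀ n, A.L n ∈ J) : A.c ∈ J := by
  have hc : A.c = (2 : ℂ) • ⁅A.L 2, A.L (-2)⁆ + (8 : ℂ) • A.L 0 := by
    rw [A.bracket_LL]
    norm_num
    module
  rw [hc]
  exact J.add_mem (J.smul_mem _ (lie_mem_right ℂ sv J _ _ (h _))) (J.smul_mem _ (h 0))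

theorem lie_mem_of_mem_maxIdeal {P : Submodule ℂ sv} {w : sv} (hw : w ∈ A.maxIdeal) (y : sv)
    (hM : ∀ m, ⁅A.M m, y⁆ ∈ P) (hY : ∀ m, ⁅A.Y m, y⁆ ∈ P) : ⁅w, y⁆ ∈ P := by
  refine lie_mem_of_mem_span_left hw y ?_
  rintro _ ((⟨m, rfl⟩ | ⟨m, rfl⟩) | rfl)
  exacts [hM m, hY m, A.c_lie y ▸ P.zero_mem]

theorem eq_top_of_basis_mem (h : ∀ i, A.basis i ∈ J) : J = ⊤ := by
  rw [← LieSubmodule.toSubmodule_eq_top, eq_top_iff, ← A.basis.span_eq, Submodule.span_le]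
  rintro _ ⟨i, rfl⟩
  exact h i

-- Taking `k > |n|` keeps the coefficients `k`, `k + (1 - n)/2`, `k - n` of `M (n + k)`,
-- `Y (n + k)`, `L (n + k)` in `⁅L n, M k⁆`, `⁅L n, Y k⁆`, `⁅L n, L k⁆` nonzero, and `n + k ≠ 0`.
theorem eq_top_of_smul_L_add_mem {n : ℤ} {a : ℂ} (ha : a ≠ 0) {w : sv} (hw : w ∈ A.maxIdeal)
    (h : a • A.L n + w ∈ J) : J = ⊤ := by
  have hbr (y : sv) (hy : ⁅w, y⁆ ∈ J) : a • ⁅A.L n, y⁆ ∈ J := by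
    have := J.sub_mem (lie_mem_left ℂ sv J _ y h) hy
    rwa [add_lie, smul_lie, add_sub_cancel_right] at this
  obtain ⟨k, hnk, hnk'⟩ : ∃ k : ℤ, n < k ∧ -n < k :=
    ⟨|n| + 1, by linarith [le_abs_self n], by linarith [neg_le_abs n]⟩
  have hM : ∀ m, A.M m ∈ J := by
    have := hbr (A.M k) (lie_mem_of_mem_maxIdeal hw _
      (fun m => A.bracket_MM m k ▸ J.zero_mem) (fun m => A.Y_lie_M m k ▸ J.zero_mem))
    rw [A.bracket_LM] at this
    have hk : (k : ℂ) ≠ 0 := by exact_mod_cast (by omega : k ≠ 0)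
    exact M_mem_of_M_mem (j := n + k) (by omega) (J.mem_of_smul_mem hk (J.mem_of_smul_mem ha this))
  have hY : ∀ m, A.Y m ∈ J := by
    have := hbr (A.Y k) (lie_mem_of_mem_maxIdeal hw _
      (fun m => lie_mem_left ℂ sv J _ _ (hM m))
      (fun m => A.bracket_YY m k ▸ J.smul_mem _ (hM _)))
    rw [A.bracket_LY] at this
    refine Y_mem_of_Y_mem (J.mem_of_smul_mem (fun h0 => ?_) (J.mem_of_smul_mem ha this))
    have : (2 * k : ℂ) = n - 1 := by linear_combination 2 * h0
    have : 2 * k = n - 1 := by exact_mod_cast this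
    omega
  have hL : ∀ m, A.L m ∈ J := by
    have := hbr (A.L k) (lie_mem_of_mem_maxIdeal hw _
      (fun m => lie_mem_left ℂ sv J _ _ (hM m)) (fun m => lie_mem_left ℂ sv J _ _ (hY m)))
    rw [A.bracket_LL, if_neg (by omega), zero_smul, add_zero] at this
    refine L_mem_of_L_mem (J.mem_of_smul_mem (fun h0 => ?_) (J.mem_of_smul_mem ha this))
    have : (k : ℂ) = n := by linear_combination h0
    have : k = n := by exact_mod_cast this
    omega
  refine A.eq_top_of_basis_mem fun i => ?_
  cases i
  exacts [by simpa using hL _, by simpa using hM _, by simpa using hY _,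
    by simpa using c_mem_of_forall_L_mem hL]

theorem exists_smul_L_add_mem {x : sv} (hxJ : x ∈ J) (hx : x ∉ A.maxIdeal) :
    ∃ n : ℤ, ∃ a : ℂ, a ≠ 0 ∧ ∃ w ∈ A.maxIdeal, a • A.L n + w ∈ J := by
  classical
  set r := A.basis.repr x
  have hsum : ∑ i ∈ r.support, r i • A.basis i = x := A.basis.linearCombination_repr x
  obtain ⟨n, hn⟩ : ∃ n : ℤ, r (.L n) ≠ 0 := by
    by_contra! h
    refine hx (hsum ▸ Submodule.sum_mem _ fun i _ => ?_)
    by_cases hi : ∃ m, i = .L m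
    · obtain ⟨m, rfl⟩ := hi
      simp [h m]
    · exact Submodule.smul_mem _ _ (A.basis_mem_maxIdeal (not_exists.mp hi))
  have hcomp := Submodule.sum_filter_mem_of_eigen (f := LieAlgebra.ad ℂ sv (A.L 0))
    (p := J) (fun y hy => lie_mem_right ℂ sv J _ y hy)
    (fun i _ => by rw [LieAlgebra.ad_apply, lie_smul, A.L_zero_lie_basis, smul_comm])
    (hsum ▸ hxJ) (n : ℂ)
  have hLn : SVIndex.L n ∈ r.support.filter (·.weight = (n : ℂ)) :=
    Finset.mem_filter.mpr ⟨Finsupp.mem_support_iff.mpr hn, rfl⟩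
  rw [← Finset.add_sum_erase _ _ hLn, basis_L] at hcomp
  refine ⟨n, r (.L n), hn, _, Submodule.sum_mem _ fun i hi => ?_, hcomp⟩
  obtain ⟨hin, hi⟩ := Finset.mem_erase.mp hi
  refine Submodule.smul_mem _ _ (A.basis_mem_maxIdeal fun m him => hin ?_)
  subst him
  rw [Int.cast_inj.mp (Finset.mem_filter.mp hi).2]

end SVAlgebra

/-- `M ⊕ Y ⊕ ℂc` is an ideal of `𝔰𝔳`, and it is the unique maximal proper ideal:
every proper ideal is contained in it. -/
theorem sv_unique_maximal_ideal (A : SVAlgebra sv) :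
    (∃ I : LieIdeal ℂ sv, (I : Submodule ℂ sv) =
        Submodule.span ℂ (Set.range A.M ∪ Set.range A.Y ∪ {A.c})) ∧
    (∀ J : LieIdeal ℂ sv, J ≠ ⊤ →
        (J : Submodule ℂ sv) ≤
          Submodule.span ℂ (Set.range A.M ∪ Set.range A.Y ∪ {A.c})) := by
  refine ⟨⟨A.maxIdeal, rfl⟩, fun J hJ x hxJ => ?_⟩
  by_contra hx
  obtain ⟨n, a, ha, w, hw, h⟩ := A.exists_smul_L_add_mem hxJ hx
  exact hJ (SVAlgebra.eq_top_of_smul_L_add_mem ha hw h)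
end

section
/- Let α ∈ ℝ∖{0}, β ∈ ℂ, μ ∈ ℂ with |μ| = 1, and set L'_n := L_n − ((n−1)/2)·α⁻¹·β·M_n ∈ 𝔰𝔳 for n ∈ ℤ. Then the elements {L'_n, c} satisfy the Virasoro relations [L'_m, L'_n] = (n−m)·L'_{m+n} + δ_{m+n,0}·((m³−m)/12)·c for all m, n ∈ ℤ; moreover, for the anti-involution θ⁺_{α,β,μ} one has θ⁺_{α,β,μ}(L'_n) = αⁿ·L'_{−n} and θ⁺_{α,β,μ}(c) = c for all n ∈ ℤ. -/
/-- A conjugate-linear anti-involution of a complex Lie algebra. -/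
structure ConjAntiInvolution (sv : Type*) [LieRing sv] [LieAlgebra ℂ sv] where
  toFun : sv → sv
  map_add' : ∀ x y : sv, toFun (x + y) = toFun x + toFun y
  map_smul' : ∀ (a : ℂ) (x : sv), toFun (a • x) = (starRingEnd ℂ a) • toFun x
  map_bracket' : ∀ x y : sv, toFun ⁅x, y⁆ = ⁅toFun y, toFun x⁆
  invol' : ∀ x : sv, toFun (toFun x) = x

variable {sv : Type*} [LieRing sv] [LieAlgebra ℂ sv]

namespace SVAlgebra

variable (A : SVAlgebra sv)

theorem bracket_ML (m n : ℤ) : ⁅A.M m, A.L n⁆ = (-(m : ℂ)) • A.M (m + n) := by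
  rw [← lie_skew, A.bracket_LM, add_comm n m, neg_smul]

theorem bracket_sub_affine_smul_M (a b : ℂ) (m n : ℤ) :
    ⁅A.L m - (a + b * m) • A.M m, A.L n - (a + b * n) • A.M n⁆ =
      ((n : ℂ) - (m : ℂ)) • (A.L (m + n) - (a + b * ↑(m + n)) • A.M (m + n))
        + (if m + n = 0 then ((m : ℂ) ^ 3 - (m : ℂ)) / 12 else 0) • A.c := by
  rw [sub_lie, lie_sub, lie_sub, lie_smul, lie_smul, smul_lie, smul_lie,
    A.bracket_LL, A.bracket_LM, A.bracket_ML, A.bracket_MM]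
  push_cast
  match_scalars <;> ring

end SVAlgebra

namespace ConjAntiInvolution

variable (θ : ConjAntiInvolution sv)

theorem map_sub (x y : sv) : θ.toFun (x - y) = θ.toFun x - θ.toFun y := by
  rw [sub_eq_add_neg, ← neg_one_smul ℂ y, θ.map_add', θ.map_smul', map_neg, map_one,
    neg_one_smul, sub_eq_add_neg]

end ConjAntiInvolution

theorem sv_virasoro_copy_thetaPlus_general (A : SVAlgebra sv) (α : ℝ) (hα : α ≠ 0)
    (β μ : ℂ)
    (θ : ConjAntiInvolution sv)
    (hL : ∀ n : ℤ, θ.toFun (A.L n) = ((α : ℂ) ^ n) • A.L (-n) +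
        ((((n : ℂ) + 1) / 2) * (α : ℂ) ^ (n - 1) * β +
          (((n : ℂ) - 1) / 2) * (α : ℂ) ^ (n - 1) * μ * starRingEnd ℂ β) • A.M (-n))
    (hc : θ.toFun A.c = A.c)
    (hM : ∀ n : ℤ, θ.toFun (A.M n) = (μ * (α : ℂ) ^ n) • A.M (-n))
    (L' : ℤ → sv)
    (hL' : ∀ n : ℤ, L' n = A.L n - ((((n : ℂ) - 1) / 2) * (α : ℂ)⁻¹ * β) • A.M n) :
    (∀ m n : ℤ, ⁅L' m, L' n⁆ = ((n : ℂ) - (m : ℂ)) • L' (m + n)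
        + (if m + n = 0 then ((m : ℂ) ^ 3 - (m : ℂ)) / 12 else 0) • A.c) ∧
    (∀ n : ℤ, θ.toFun (L' n) = ((α : ℂ) ^ n) • L' (-n)) ∧
    θ.toFun A.c = A.c := by
  have hL'_affine : ∀ n : ℤ,
      L' n = A.L n - (-((α : ℂ)⁻¹ * β / 2) + (α : ℂ)⁻¹ * β / 2 * n) • A.M n := fun n => by
    rw [hL' n]
    congr 2
    ring
  refine ⟨fun m n => ?_, fun n => ?_, hc⟩
  · rw [hL'_affine, hL'_affine, hL'_affine]
    exact A.bracket_sub_affine_smul_M _ _ m n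
  · have hzpow : (α : ℂ) ^ (n - 1) = (α : ℂ) ^ n * (α : ℂ)⁻¹ :=
      zpow_sub_one₀ (Complex.ofReal_ne_zero.mpr hα) n
    rw [hL' n, hL' (-n), θ.map_sub, θ.map_smul', hL, hM, hzpow]
    simp only [map_mul, map_div₀, map_sub, map_inv₀, map_intCast, map_one, map_ofNat,
      Complex.conj_ofReal]
    push_cast
    match_scalars
    · field_simp
    · field_simp
      ring

/-- The elements `L'_n = L_n − ((n−1)/2)·α⁻¹·β·M_n` together with `c` satisfy the
Virasoro relations, and `θ⁺_{α,β,μ}` restricts to `L'_n ↦ αⁿ·L'_{−n}`, `c ↦ c`. -/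
theorem sv_virasoro_copy_thetaPlus (A : SVAlgebra sv) (α : ℝ) (hα : α ≠ 0)
    (β μ s t : ℂ) (hμ : ‖μ‖ = 1) (hs : s ^ 2 = μ) (ht : t ^ 2 = (α : ℂ))
    (θ : ConjAntiInvolution sv)
    (hL : ∀ n : ℤ, θ.toFun (A.L n) = ((α : ℂ) ^ n) • A.L (-n) +
        ((((n : ℂ) + 1) / 2) * (α : ℂ) ^ (n - 1) * β +
          (((n : ℂ) - 1) / 2) * (α : ℂ) ^ (n - 1) * μ * starRingEnd ℂ β) • A.M (-n))
    (hc : θ.toFun A.c = A.c)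
    (hM : ∀ n : ℤ, θ.toFun (A.M n) = (μ * (α : ℂ) ^ n) • A.M (-n))
    (hY : ∀ n : ℤ, θ.toFun (A.Y n) = (s * t ^ (2 * n + 1)) • A.Y (-n - 1))
    (L' : ℤ → sv)
    (hL' : ∀ n : ℤ, L' n = A.L n - ((((n : ℂ) - 1) / 2) * (α : ℂ)⁻¹ * β) • A.M n) :
    (∀ m n : ℤ, ⁅L' m, L' n⁆ = ((n : ℂ) - (m : ℂ)) • L' (m + n)
        + (if m + n = 0 then ((m : ℂ) ^ 3 - (m : ℂ)) / 12 else 0) • A.c) ∧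
    (∀ n : ℤ, θ.toFun (L' n) = ((α : ℂ) ^ n) • L' (-n)) ∧
    θ.toFun A.c = A.c :=
  sv_virasoro_copy_thetaPlus_general A α hα β μ θ hL hc hM L' hL'
end

section
/- Let α ∈ ℂ∖{0} and let (β_m)_{m∈ℤ} be complex numbers satisfying (n−m)·β_{m+n} = n·α^m·β_n − m·α^n·β_m for all m, n ∈ ℤ. Then β_m = ((m+1)/2)·α^{m−1}·β₁ − ((m−1)/2)·α^{m+1}·β_{−1} for every m ∈ ℤ. -/
/-!
Dividing the relation by `α ^ (m + n)` shows that `γ m = β m / α ^ m` satisfies the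
`α`-free relation `(n - m) γ (m + n) = n γ n - m γ m`. This relation is linear, is satisfied
by every affine function of `m`, and is invariant under `m ↦ -m`; a solution vanishing at
`±1` vanishes at `0` and `2`, and the instance `n = 1` then propagates zeros upwards from `2`
(the coefficient `1 - m` is nonzero there). Hence every solution is the affine function
through its values at `±1`.
-/

variable {K : Type*} [Field K]

def BetaRelation (f : ℤ → K) : Prop :=
  ∀ m n : ℤ, ((n : K) - m) * f (m + n) = n * f n - m * f m

namespace BetaRelation

variable {f g : ℤ → K}

theorem affine (a b : K) : BetaRelation fun m : ℤ => a + b * m := by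
  intro m n
  push_cast
  ring

theorem sub (hf : BetaRelation f) (hg : BetaRelation g) : BetaRelation (f - g) := by
  intro m n
  simp only [Pi.sub_apply]
  linear_combination hf m n - hg m n

theorem comp_neg (hf : BetaRelation f) : BetaRelation fun m => f (-m) := by
  intro m n
  have h := hf (-m) (-n)
  rw [← neg_add] at h
  push_cast at h
  linear_combination -h

variable [CharZero K]

theorem eq_zero_of_nonneg (hf : BetaRelation f) (h₁ : f 1 = 0) (hneg : f (-1) = 0) {m : ℤ}
    (hm : 0 ≤ m) : f m = 0 := by
  have h₀ : f 0 = 0 := by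
    have h := hf 1 (-1)
    norm_num [h₁, hneg] at h
    exact h
  have h₂ : f 2 = 0 := by
    have h := hf 2 (-1)
    norm_num [h₁, hneg] at h
    exact h
  obtain rfl | rfl | hm2 : m = 0 ∨ m = 1 ∨ 2 ≤ m := by omega
  · exact h₀
  · exact h₁
  induction m, hm2 using Int.leInduction with
  | base => exact h₂
  | succ k hk ih =>
    have h := hf k 1
    have hk1 : (1 : K) - k ≠ 0 := by
      rw [sub_ne_zero]
      exact_mod_cast (show (1 : ℤ) ≠ k by omega)
    simpa [h₁, ih (by omega), hk1] using h

theorem eq_zero (hf : BetaRelation f) (h₁ : f 1 = 0) (hneg : f (-1) = 0) (m : ℤ) :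
    f m = 0 := by
  rcases le_total 0 m with hm | hm
  · exact hf.eq_zero_of_nonneg h₁ hneg hm
  · simpa using hf.comp_neg.eq_zero_of_nonneg (by simpa) (by simpa) (neg_nonneg.mpr hm)

theorem eq_affine (hf : BetaRelation f) (m : ℤ) :
    f m = ((m + 1) / 2) * f 1 - ((m - 1) / 2) * f (-1) := by
  set a := (f 1 + f (-1)) / 2
  set b := (f 1 - f (-1)) / 2
  have h := (hf.sub (affine a b)).eq_zero (by simp [a, b]; ring) (by simp [a, b]; ring) m
  simp only [Pi.sub_apply, sub_eq_zero] at h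
  rw [h]
  ring

end BetaRelation

theorem betaRelation_zpow_inv_mul {α : K} (hα : α ≠ 0) {β : ℤ → K}
    (h : ∀ m n : ℤ, ((n : K) - m) * β (m + n) = n * α ^ m * β n - m * α ^ n * β m) :
    BetaRelation fun m => (α ^ m)⁻¹ * β m := by
  intro m n
  have hmn : α ^ (m + n) = α ^ m * α ^ n := zpow_add₀ hα m n
  have hm : α ^ m ≠ 0 := zpow_ne_zero m hα
  have hn : α ^ n ≠ 0 := zpow_ne_zero n hα
  simp only [hmn]
  field_simp
  linear_combination h m n

/-- If the complex numbers `β m` satisfy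
`(n−m)·β_{m+n} = n·α^m·β_n − m·α^n·β_m` for all `m, n ∈ ℤ`, then
`β_m = ((m+1)/2)·α^{m−1}·β₁ − ((m−1)/2)·α^{m+1}·β_{−1}` for all `m ∈ ℤ`. -/
theorem beta_recursion_solution (α : ℂ) (hα : α ≠ 0) (β : ℤ → ℂ)
    (h : ∀ m n : ℤ, ((n : ℂ) - (m : ℂ)) * β (m + n) =
        (n : ℂ) * α ^ m * β n - (m : ℂ) * α ^ n * β m) :
    ∀ m : ℤ, β m = (((m : ℂ) + 1) / 2) * α ^ (m - 1) * β 1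
        - (((m : ℂ) - 1) / 2) * α ^ (m + 1) * β (-1) := by
  intro m
  have hγ := (betaRelation_zpow_inv_mul hα h).eq_affine m
  have hm : α ^ m ≠ 0 := zpow_ne_zero m hα
  rw [zpow_sub_one₀ hα, zpow_add_one₀ hα]
  simp only [zpow_one, zpow_neg_one, inv_inv] at hγ
  field_simp at hγ ⊢
  linear_combination hγ
end
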